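/- arXiv:2102.02710 — 3 statements merged into one kernel-verified Lean document; each statement's English description precedes it below -/
import Mathlib

section
/- For all a > 0 and b > 0, the lower incomplete Gamma function has the power series representation ∫₀^a t^{b−1} e^{−t} dt = a^b · e^{−a} · Σ_{x=0}^∞ a^x / ∏_{j=0}^{x} (b + j), where the series on the right converges. -/
open MeasureTheory Set Filter Finset

noncomputable def LIG.J (a c : ℝ) : ℝ := ∫ t in Set.Ioo (0:ℝ) a, t ^ (c - 1) * Real.exp (-t)

lemma LIG.J_eq_complex {a : ℝ} (ha : 0 ≤ a) (c : ℝ) :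
    Complex.partialGamma (c : ℂ) a = ((LIG.J a c : ℝ) : ℂ) := by
  rw [Complex.partialGamma, LIG.J,
    ← MeasureTheory.integral_Ioc_eq_integral_Ioo, ← intervalIntegral.integral_of_le ha,
    ← intervalIntegral.integral_ofReal]
  apply intervalIntegral.integral_congr
  intro x hx
  rw [Set.uIcc_of_le ha] at hx
  have hx0 : (0:ℝ) ≤ x := hx.1
  simp only [Complex.ofReal_mul, Complex.ofReal_cpow hx0]
  push_cast
  ring

lemma LIG.J_rec {a : ℝ} (ha : 0 ≤ a) {c : ℝ} (hc : 0 < c) :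
    LIG.J a (c + 1) = c * LIG.J a c - Real.exp (-a) * a ^ c := by
  have h := Complex.partialGamma_add_one (s := (c : ℂ)) (by simpa using hc) ha
  rw [show ((c:ℂ) + 1) = (((c + 1 : ℝ)):ℂ) by push_cast; ring] at h
  rw [LIG.J_eq_complex ha, LIG.J_eq_complex ha] at h
  have : ((LIG.J a (c+1) : ℝ) : ℂ) = (((c * LIG.J a c - Real.exp (-a) * a ^ c : ℝ)) : ℂ) := by
    rw [h, ← Complex.ofReal_cpow ha]
    push_cast
    ring
  exact_mod_cast this

lemma LIG.J_integrable {a c : ℝ} (hc : 0 < c) :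
    IntegrableOn (fun t : ℝ => t ^ (c - 1) * Real.exp (-t)) (Set.Ioo 0 a) := by
  have h := (Real.GammaIntegral_convergent hc).mono_set
    (Set.Ioo_subset_Ioi_self : Set.Ioo (0:ℝ) a ⊆ Set.Ioi 0)
  exact h.congr_fun (fun x _ => by ring) measurableSet_Ioo

lemma LIG.J_nonneg (a c : ℝ) : 0 ≤ LIG.J a c := by
  apply MeasureTheory.setIntegral_nonneg measurableSet_Ioo
  intro x hx
  exact mul_nonneg (Real.rpow_nonneg hx.1.le _) (Real.exp_pos _).le

lemma LIG.J_le {a c : ℝ} (ha : 0 < a) (hc : 1 ≤ c) : LIG.J a c ≤ a ^ c := by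
  have hint : IntegrableOn (fun t : ℝ => t ^ (c - 1) * Real.exp (-t)) (Set.Ioo 0 a) :=
    LIG.J_integrable (by linarith)
  have hle : LIG.J a c ≤ ∫ _ in Set.Ioo (0:ℝ) a, a ^ (c - 1) := by
    apply MeasureTheory.setIntegral_mono_on hint (integrableOn_const (by
      simp [Real.volume_Ioo])) measurableSet_Ioo
    intro x hx
    calc x ^ (c - 1) * Real.exp (-x) ≤ a ^ (c - 1) * 1 := by
          apply mul_le_mul _ (Real.exp_le_one_iff.2 (by linarith [hx.1])) (Real.exp_pos _).le
            (Real.rpow_nonneg ha.le _)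
          exact Real.rpow_le_rpow hx.1.le hx.2.le (by linarith)
      _ = a ^ (c - 1) := mul_one _
  calc LIG.J a c ≤ ∫ _ in Set.Ioo (0:ℝ) a, a ^ (c - 1) := hle
    _ = a * a ^ (c - 1) := by
        rw [MeasureTheory.setIntegral_const, Real.volume_real_Ioo_of_le (by linarith), smul_eq_mul]
        ring_nf
    _ = a ^ c := by
        rw [mul_comm, ← Real.rpow_add_one (ne_of_gt ha)]
        congr 1
        ring

lemma LIG.prod_pos {b : ℝ} (hb : 0 < b) (n : ℕ) :
    0 < ∏ j ∈ Finset.range n, (b + (j : ℝ)) :=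
  Finset.prod_pos fun j _ => by positivity

lemma LIG.summable_aux {a b : ℝ} (ha : 0 < a) (hb : 0 < b) :
    Summable (fun n : ℕ => a ^ n / ∏ j ∈ Finset.range n, (b + (j : ℝ))) := by
  set f : ℕ → ℝ := fun n => a ^ n / ∏ j ∈ Finset.range n, (b + (j : ℝ)) with hf
  have hfpos : ∀ n, 0 < f n := fun n => div_pos (pow_pos ha n) (LIG.prod_pos hb n)
  apply summable_of_ratio_test_tendsto_lt_one (l := 0) one_pos
    (Filter.Eventually.of_forall fun n => (hfpos n).ne')
  have heq : (fun n : ℕ => ‖f (n + 1)‖ / ‖f n‖) = fun n : ℕ => a / (b + n) := by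
    funext n
    rw [Real.norm_of_nonneg (hfpos (n+1)).le, Real.norm_of_nonneg (hfpos n).le, hf]
    simp only [Finset.prod_range_succ, pow_succ]
    have h1 : (a : ℝ) ^ n ≠ 0 := (pow_pos ha n).ne'
    have h2 : (∏ j ∈ Finset.range n, (b + (j : ℝ))) ≠ 0 := (LIG.prod_pos hb n).ne'
    have h3 : b + (n : ℝ) ≠ 0 := by positivity
    field_simp
  rw [heq]
  exact Filter.Tendsto.const_div_atTop
    (tendsto_atTop_add_const_left _ b (tendsto_natCast_atTop_atTop)) a

set_option maxHeartbeats 1000000 in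
/-- Power series representation of the lower incomplete Gamma function:
`∫₀ᵃ t^{b−1} e^{−t} dt = a^b e^{−a} Σ_{x=0}^∞ a^x / ∏_{j=0}^x (b + j)`,
where the series converges. -/
theorem lower_incomplete_gamma_series (a b : ℝ) (ha : 0 < a) (hb : 0 < b) :
    Summable (fun x : ℕ => a ^ x / ∏ j ∈ Finset.range (x + 1), (b + (j : ℝ))) ∧
    (∫ t in Set.Ioo (0:ℝ) a, t ^ (b - 1) * Real.exp (-t))
      = a ^ b * Real.exp (-a) *
          ∑' x : ℕ, a ^ x / ∏ j ∈ Finset.range (x + 1), (b + (j : ℝ)) := by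
  set P : ℕ → ℝ := fun n => ∏ j ∈ Finset.range n, (b + (j : ℝ)) with hPdef
  have hP : ∀ n, 0 < P n := LIG.prod_pos hb
  have hg : Summable (fun n : ℕ => a ^ n / P n) := LIG.summable_aux ha hb
  have hf : Summable (fun x : ℕ => a ^ x / P (x + 1)) := by
    have h1 : Summable (fun x : ℕ => a ^ (x + 1) / P (x + 1)) := (summable_nat_add_iff (f := fun n => a ^ n / P n) 1).2 hg
    refine (h1.div_const a).congr fun x => ?_
    rw [pow_succ]
    field_simp
  refine ⟨hf, ?_⟩
  have key : ∀ n : ℕ, LIG.J a b =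
      a ^ b * Real.exp (-a) * (∑ x ∈ Finset.range n, a ^ x / P (x + 1))
        + LIG.J a (b + n) / P n := by
    intro n
    induction n with
    | zero => simp [hPdef]
    | succ n ih =>
      have hbn : 0 < b + (n : ℝ) := by positivity
      have hrec := LIG.J_rec ha.le hbn
      have hcast : b + (n : ℝ) + 1 = b + ((n + 1 : ℕ) : ℝ) := by push_cast; ring
      rw [hcast] at hrec
      have hJn : LIG.J a (b + (n : ℝ)) =
          (Real.exp (-a) * a ^ (b + (n : ℝ)) + LIG.J a (b + ((n + 1 : ℕ) : ℝ))) / (b + n) := by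
        rw [hrec, eq_div_iff hbn.ne']
        ring
      rw [ih, hJn, Finset.sum_range_succ]
      have hPsucc : P (n + 1) = P n * (b + n) := Finset.prod_range_succ _ _
      have hrpow : a ^ (b + (n : ℝ)) = a ^ b * a ^ n := by
        rw [Real.rpow_add ha, Real.rpow_natCast]
      rw [hPsucc, hrpow]
      have h1 := (hP n).ne'
      have h2 := hbn.ne'
      field_simp
      ring
  have hS : Filter.Tendsto (fun n => ∑ x ∈ Finset.range n, a ^ x / P (x + 1)) Filter.atTop
      (nhds (∑' x : ℕ, a ^ x / P (x + 1))) := hf.hasSum.tendsto_sum_nat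
  have hg0 : Filter.Tendsto (fun n : ℕ => a ^ n / P n) Filter.atTop (nhds 0) :=
    hg.tendsto_atTop_zero
  have hR : Filter.Tendsto (fun n : ℕ => LIG.J a (b + n) / P n) Filter.atTop (nhds 0) := by
    have hub : Filter.Tendsto (fun n : ℕ => a ^ b * (a ^ n / P n)) Filter.atTop (nhds 0) := by
      simpa using hg0.const_mul (a ^ b)
    apply tendsto_of_tendsto_of_tendsto_of_le_of_le' tendsto_const_nhds hub
    · exact Filter.Eventually.of_forall fun n => div_nonneg (LIG.J_nonneg a _) (hP n).le
    · filter_upwards [Filter.eventually_ge_atTop 1] with n hn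
      have h1 : (1 : ℝ) ≤ b + n := by
        have : (1 : ℝ) ≤ (n : ℝ) := by exact_mod_cast hn
        linarith
      have hle := LIG.J_le ha h1
      calc LIG.J a (b + (n : ℝ)) / P n ≤ a ^ (b + (n : ℝ)) / P n := by
            gcongr
        _ = a ^ b * (a ^ n / P n) := by
            rw [Real.rpow_add ha, Real.rpow_natCast]; ring
  have hlim : Filter.Tendsto (fun n : ℕ =>
      a ^ b * Real.exp (-a) * (∑ x ∈ Finset.range n, a ^ x / P (x + 1))
        + LIG.J a (b + n) / P n) Filter.atTop
      (nhds (a ^ b * Real.exp (-a) * (∑' x : ℕ, a ^ x / P (x + 1)) + 0)) :=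
    (hS.const_mul _).add hR
  have hconst := hlim.congr fun n => (key n).symm
  have hfin := tendsto_nhds_unique tendsto_const_nhds hconst
  rw [add_zero] at hfin
  exact hfin
end

section
/- For all λ, μ, θ > 0, Σ_{x=1}^∞ λ^x / ∏_{j=1}^{x} (μ + jθ) = γ(λ/θ, μ/θ) · (λ/θ)^{−μ/θ} · (μ/θ) · e^{λ/θ} − 1, where γ(a,b) = ∫₀^a t^{b−1} e^{−t} dt is the lower incomplete Gamma function; in particular the series on the left converges. -/
open MeasureTheory intervalIntegral Finset Real

private lemma igr (A r : ℝ) (hr : -1 < r) :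
    IntervalIntegrable (fun t => t ^ r * Real.exp (-t)) volume 0 A :=
  (intervalIntegrable_rpow' hr).mul_continuousOn
    (Real.continuous_exp.comp continuous_neg).continuousOn

private lemma grec (A : ℝ) (hA : 0 < A) (c : ℝ) (hc : 0 < c) :
    ∫ t in (0:ℝ)..A, t ^ (c-1) * Real.exp (-t)
      = (A ^ c * Real.exp (-A) + ∫ t in (0:ℝ)..A, t ^ c * Real.exp (-t)) / c := by
  have h1 : IntervalIntegrable (fun t => t ^ (c-1) * Real.exp (-t)) volume 0 A :=
    igr A (c-1) (by linarith)
  have h2 : IntervalIntegrable (fun t => t ^ c * Real.exp (-t)) volume 0 A :=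
    igr A c (by linarith)
  have hftc : ∫ t in (0:ℝ)..A, (c * (t ^ (c-1) * Real.exp (-t)) - t ^ c * Real.exp (-t))
      = A ^ c * Real.exp (-A) - (0:ℝ) ^ c * Real.exp (-(0:ℝ)) := by
    apply integral_eq_sub_of_hasDeriv_right_of_le hA.le
    · apply ContinuousOn.mul
      · exact fun t ht => (Real.continuousAt_rpow_const t c (Or.inr hc.le)).continuousWithinAt
      · exact (Real.continuous_exp.comp continuous_neg).continuousOn
    · intro t ht
      have hd : HasDerivAt (fun t : ℝ => t ^ c * Real.exp (-t))
          (c * t ^ (c-1) * Real.exp (-t) + t ^ c * (Real.exp (-t) * (-1))) t :=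
        (Real.hasDerivAt_rpow_const (Or.inl ht.1.ne')).mul
          ((Real.hasDerivAt_exp (-t)).comp t (hasDerivAt_neg t))
      have heq : c * (t ^ (c-1) * Real.exp (-t)) - t ^ c * Real.exp (-t)
          = c * t ^ (c-1) * Real.exp (-t) + t ^ c * (Real.exp (-t) * (-1)) := by ring
      rw [heq]
      exact hd.hasDerivWithinAt
    · exact (h1.const_mul c).sub h2
  rw [integral_sub (h1.const_mul c) h2, intervalIntegral.integral_const_mul,
    Real.zero_rpow hc.ne', zero_mul, sub_zero] at hftc
  field_simp
  linarith

private lemma key (A b : ℝ) (hA : 0 < A) (hb : 0 < b) :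
    (Summable fun n : ℕ => A ^ n / ∏ j ∈ Finset.range (n+1), (b + (j:ℝ))) ∧
    (∫ t in (0:ℝ)..A, t ^ (b-1) * Real.exp (-t))
      = Real.exp (-A) * A ^ b * ∑' n : ℕ, A ^ n / ∏ j ∈ Finset.range (n+1), (b + (j:ℝ)) := by
  set C : ℕ → ℝ := fun N => ∏ j ∈ Finset.range N, (b + (j:ℝ)) with hC
  have hCpos : ∀ N, 0 < C N := by
    intro N; apply Finset.prod_pos; intro j _; positivity
  have hCsucc : ∀ N, C (N+1) = C N * (b + N) := fun N => Finset.prod_range_succ _ N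
  have hCge : ∀ N : ℕ, b * N.factorial ≤ C (N+1) := by
    intro N
    induction N with
    | zero => simp [hC]
    | succ N ih =>
      rw [hCsucc (N+1)]
      push_cast [Nat.factorial_succ]
      calc b * ((N+1) * N.factorial) = (b * N.factorial) * (N+1) := by ring
        _ ≤ C (N+1) * (N+1) := by
            apply mul_le_mul_of_nonneg_right ih; positivity
        _ ≤ C (N+1) * (b + (N+1)) := by
            apply mul_le_mul_of_nonneg_left (by linarith) (hCpos _).le
  have hle : ∀ n : ℕ, A ^ n / C (n+1) ≤ (1/b) * (A ^ n / n.factorial) := by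
    intro n
    have hf : (0:ℝ) < n.factorial := by positivity
    have h := div_le_div_of_nonneg_left (show (0:ℝ) ≤ A ^ n by positivity)
      (show (0:ℝ) < b * n.factorial by positivity) (hCge n)
    calc A ^ n / C (n+1) ≤ A ^ n / (b * n.factorial) := h
      _ = (1/b) * (A ^ n / n.factorial) := by field_simp
  have hsum : Summable fun n : ℕ => A ^ n / C (n+1) := by
    apply Summable.of_nonneg_of_le (fun n => by positivity) hle
    exact (Real.summable_pow_div_factorial A).mul_left (1/b)
  refine ⟨hsum, ?_⟩
  -- the partial-sum identity
  set G : ℝ → ℝ := fun c => ∫ t in (0:ℝ)..A, t ^ (c-1) * Real.exp (-t) with hG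
  have hpart : ∀ N : ℕ, G b
      = Real.exp (-A) * ∑ n ∈ Finset.range N, A ^ b * A ^ n / C (n+1) + G (b + N) / C N := by
    intro N
    induction N with
    | zero => simp [hC]
    | succ N ih =>
      have hbN : (0:ℝ) < b + N := by positivity
      have hrec : G (b + (N:ℝ)) = (A ^ (b + (N:ℝ)) * Real.exp (-A) + G (b + (N:ℝ) + 1)) / (b + N) := by
        have h := grec A hA (b + (N:ℝ)) hbN
        simp only [hG]
        rw [show b + (N:ℝ) + 1 - 1 = b + (N:ℝ) by ring]
        exact h
      have h1 : G (b + ((N:ℕ) + 1 : ℕ)) = G (b + (N:ℝ) + 1) := by push_cast; ring_nf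
      rw [ih, hrec, Finset.sum_range_succ, hCsucc, h1]
      have hAbn : A ^ (b + (N:ℝ)) = A ^ b * A ^ N := by
        rw [Real.rpow_add hA, Real.rpow_natCast]
      rw [hAbn]
      have hCne : C N ≠ 0 := (hCpos N).ne'
      field_simp
      ring
  -- remainder tends to 0
  have hrem0 : ∀ N : ℕ, 0 ≤ G (b + N) / C N := by
    intro N
    apply div_nonneg _ (hCpos N).le
    apply intervalIntegral.integral_nonneg hA.le
    intro t ht
    have := ht.1
    positivity
  have hremle : ∀ N : ℕ, G (b + N) / C N ≤ (A ^ b / b) * (A ^ N / N.factorial) := by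
    intro N
    have hbN : (0:ℝ) < b + N := by positivity
    have hGle : G (b + N) ≤ A ^ (b + (N:ℝ)) / (b + N) := by
      have hmono : G (b + N) ≤ ∫ t in (0:ℝ)..A, t ^ (b + (N:ℝ) - 1) := by
        apply intervalIntegral.integral_mono_on hA.le (igr A _ (by linarith))
          (intervalIntegrable_rpow' (by linarith))
        intro t ht
        have h1 : t ^ (b + (N:ℝ) - 1) * Real.exp (-t) ≤ t ^ (b + (N:ℝ) - 1) * 1 := by
          apply mul_le_mul_of_nonneg_left _ (Real.rpow_nonneg ht.1 _)
          exact Real.exp_le_one_iff.mpr (by linarith [ht.1])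
        simpa using h1
      have hN0 : (0:ℝ) ≤ N := Nat.cast_nonneg N
      rw [integral_rpow (Or.inl (by linarith))] at hmono
      rw [Real.zero_rpow (show b + (N:ℝ) - 1 + 1 ≠ 0 from (by linarith : (0:ℝ) < b + (N:ℝ) - 1 + 1).ne'),
        sub_zero] at hmono
      convert hmono using 2 <;> ring
    calc G (b + N) / C N ≤ (A ^ (b + (N:ℝ)) / (b + N)) / C N := by
          gcongr
      _ = A ^ (b + (N:ℝ)) / C (N+1) := by
          rw [hCsucc, div_div, mul_comm (b + (N:ℝ))]
      _ = (A ^ b * A ^ N) / C (N+1) := by rw [Real.rpow_add hA, Real.rpow_natCast]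
      _ ≤ (A ^ b) * ((1/b) * (A ^ N / N.factorial)) := by
          rw [mul_div_assoc]
          exact mul_le_mul_of_nonneg_left (hle N) (by positivity)
      _ = (A ^ b / b) * (A ^ N / N.factorial) := by ring
  have hremlim : Filter.Tendsto (fun N : ℕ => G (b + N) / C N) Filter.atTop (nhds 0) := by
    apply squeeze_zero hrem0 hremle
    have := ((Real.summable_pow_div_factorial A).mul_left (A ^ b / b)).tendsto_atTop_zero
    simpa using this
  -- conclude
  have hps : Filter.Tendsto
      (fun N : ℕ => ∑ n ∈ Finset.range N, Real.exp (-A) * (A ^ b * A ^ n / C (n+1)))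
      Filter.atTop (nhds (G b)) := by
    have : ∀ N : ℕ, ∑ n ∈ Finset.range N, Real.exp (-A) * (A ^ b * A ^ n / C (n+1))
        = G b - G (b + N) / C N := by
      intro N
      rw [hpart N, ← Finset.mul_sum]
      ring
    simp only [this]
    simpa using (tendsto_const_nhds.sub hremlim)
  have hsum2 : Summable fun n : ℕ => Real.exp (-A) * (A ^ b * A ^ n / C (n+1)) := by
    apply Summable.mul_left
    have : ∀ n : ℕ, A ^ b * A ^ n / C (n+1) = A ^ b * (A ^ n / C (n+1)) := by
      intro n; ring
    simp only [this]
    exact hsum.mul_left _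
  have heq := tendsto_nhds_unique hsum2.hasSum.tendsto_sum_nat hps
  have hterm : ∀ n : ℕ, Real.exp (-A) * (A ^ b * A ^ n / C (n+1))
      = (Real.exp (-A) * A ^ b) * (A ^ n / C (n+1)) := fun n => by ring
  show G b = Real.exp (-A) * A ^ b * ∑' n : ℕ, A ^ n / C (n+1)
  rw [← heq]
  simp only [hterm]
  exact tsum_mul_left

/-- Closed form of the series `Σ_{x=1}^∞ λ^x / ∏_{j=1}^x (μ + jθ)` in terms of the lower
incomplete Gamma function `γ(a,b) = ∫₀ᵃ t^{b−1} e^{−t} dt`: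
the series converges and equals `γ(λ/θ, μ/θ) (λ/θ)^{−μ/θ} (μ/θ) e^{λ/θ} − 1`. -/
theorem series_eq_incomplete_gamma (lam mu θ : ℝ)
    (hlam : 0 < lam) (hmu : 0 < mu) (hθ : 0 < θ) :
    Summable (fun x : ℕ => lam ^ (x + 1) / ∏ j ∈ Finset.Icc 1 (x + 1), (mu + (j : ℝ) * θ)) ∧
    (∑' x : ℕ, lam ^ (x + 1) / ∏ j ∈ Finset.Icc 1 (x + 1), (mu + (j : ℝ) * θ))
      = (∫ t in Set.Ioo (0:ℝ) (lam / θ), t ^ (mu / θ - 1) * Real.exp (-t))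
          * (lam / θ) ^ (-(mu / θ)) * (mu / θ) * Real.exp (lam / θ) - 1 := by
  set A : ℝ := lam / θ with hAdef
  set b : ℝ := mu / θ with hbdef
  have hA : 0 < A := div_pos hlam hθ
  have hb : 0 < b := div_pos hmu hθ
  set C : ℕ → ℝ := fun N => ∏ j ∈ Finset.range N, (b + (j:ℝ)) with hC
  have hCpos : ∀ N, 0 < C N := by
    intro N; apply Finset.prod_pos; intro j _; positivity
  -- the terms of the series
  have hterm : ∀ x : ℕ, lam ^ (x + 1) / ∏ j ∈ Finset.Icc 1 (x + 1), (mu + (j : ℝ) * θ)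
      = b * (A ^ (x+1) / C (x+2)) := by
    intro x
    have hprod1 : ∏ j ∈ Finset.Icc 1 (x + 1), (mu + (j : ℝ) * θ)
        = θ ^ (x+1) * ∏ j ∈ Finset.Icc 1 (x + 1), (b + (j:ℝ)) := by
      calc ∏ j ∈ Finset.Icc 1 (x + 1), (mu + (j : ℝ) * θ)
          = ∏ j ∈ Finset.Icc 1 (x + 1), (θ * (b + (j:ℝ))) := by
            apply Finset.prod_congr rfl
            intro j _
            rw [hbdef, mul_add, mul_div_cancel₀ _ hθ.ne']
            ring
        _ = (∏ _j ∈ Finset.Icc 1 (x + 1), θ) * ∏ j ∈ Finset.Icc 1 (x + 1), (b + (j:ℝ)) :=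
            Finset.prod_mul_distrib
        _ = θ ^ (x+1) * ∏ j ∈ Finset.Icc 1 (x + 1), (b + (j:ℝ)) := by
            rw [Finset.prod_const, Nat.card_Icc]
            norm_num
    have hprod2 : C (x+2) = b * ∏ j ∈ Finset.Icc 1 (x + 1), (b + (j:ℝ)) := by
      have h1 : ∏ j ∈ Finset.Icc 1 (x + 1), (b + (j:ℝ))
          = ∏ k ∈ Finset.range (x+1), (b + ((k+1 : ℕ) : ℝ)) := by
        rw [show Finset.Icc 1 (x+1) = Finset.Ico 1 (x+2) by rw [← Finset.Ico_add_one_right_eq_Icc]; rfl,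
          Finset.prod_Ico_eq_prod_range]
        norm_num
        apply Finset.prod_congr rfl
        intro k _
        congr 1
        ring
      show ∏ j ∈ Finset.range (x+1+1), (b + (j:ℝ)) = _
      rw [Finset.prod_range_succ' (fun j => (b + (j:ℝ))) (x+1)]
      rw [h1]
      ring
    have hlam' : lam ^ (x+1) = θ ^ (x+1) * A ^ (x+1) := by
      rw [← mul_pow]
      congr 1
      rw [hAdef]; field_simp
    rw [hprod1, hlam', hprod2]
    have hbprod : 0 < ∏ j ∈ Finset.Icc 1 (x + 1), (b + (j:ℝ)) := by
      apply Finset.prod_pos; intro j _; positivity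
    field_simp
  obtain ⟨hsum, hint⟩ := key A b hA hb
  have hsum' : Summable fun x : ℕ => b * (A ^ (x+1) / C (x+1+1)) :=
    ((hsum.comp_injective Nat.succ_injective)).mul_left b
  constructor
  · apply Summable.congr hsum'
    intro x
    exact (hterm x).symm
  · have htsum : (∑' x : ℕ, lam ^ (x + 1) / ∏ j ∈ Finset.Icc 1 (x + 1), (mu + (j : ℝ) * θ))
        = ∑' x : ℕ, b * (A ^ (x+1) / C (x+1+1)) := by
      apply tsum_congr
      intro x
      exact hterm x
    rw [htsum, tsum_mul_left]
    have hzero : (∑' n : ℕ, A ^ n / C (n+1)) = 1/b + ∑' x : ℕ, A ^ (x+1) / C (x+1+1) := by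
      have h := Summable.tsum_eq_zero_add (f := fun n : ℕ => A ^ n / C (n+1)) hsum
      simp only [pow_zero] at h
      rw [h]
      congr 1
      show (1:ℝ) / C 1 = 1/b
      simp [hC]
    have hIoo : (∫ t in Set.Ioo (0:ℝ) A, t ^ (b - 1) * Real.exp (-t))
        = ∫ t in (0:ℝ)..A, t ^ (b-1) * Real.exp (-t) := by
      rw [intervalIntegral.integral_of_le hA.le, MeasureTheory.integral_Ioc_eq_integral_Ioo]
    have hintC : (∫ t in (0:ℝ)..A, t ^ (b-1) * Real.exp (-t))
        = Real.exp (-A) * A ^ b * ∑' n : ℕ, A ^ n / C (n+1) := hint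
    rw [hIoo, hintC]
    have htail : (∑' x : ℕ, A ^ (x+1) / C (x+1+1)) = (∑' n : ℕ, A ^ n / C (n+1)) - 1/b := by
      rw [hzero]; ring
    rw [htail]
    set S := ∑' n : ℕ, A ^ n / C (n+1) with hS
    have hApow : A ^ b * A ^ (-b) = 1 := by
      rw [← Real.rpow_add hA]; simp
    have hexp : Real.exp (-A) * Real.exp A = 1 := by
      rw [← Real.exp_add]; simp
    rw [show Real.exp (-A) * A ^ b * S * A ^ (-b) * b * Real.exp A
        = (A ^ b * A ^ (-b)) * (Real.exp (-A) * Real.exp A) * (b * S) by ring, hApow, hexp]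
    rw [mul_sub, mul_one_div, div_self hb.ne']
    ring
end

section
/- For every natural number n ≥ 1, Σ_{x=1}^∞ x · n^x / (n + x)! = 1 / (n − 1)!, where the series on the left converges. -/
open Filter Topology

/-- For every natural number `n ≥ 1`, the series `Σ_{x=1}^∞ x n^x / (n + x)!` converges
and equals `1 / (n − 1)!`. -/
theorem series_x_npow_div_factorial (n : ℕ) (hn : 1 ≤ n) :
    Summable (fun x : ℕ =>
      ((x : ℝ) + 1) * (n : ℝ) ^ (x + 1) / (Nat.factorial (n + (x + 1)) : ℝ)) ∧
    (∑' x : ℕ, ((x : ℝ) + 1) * (n : ℝ) ^ (x + 1) / (Nat.factorial (n + (x + 1)) : ℝ))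
      = 1 / (Nat.factorial (n - 1) : ℝ) := by
  set f : ℕ → ℝ := fun x => ((x : ℝ) + 1) * (n : ℝ) ^ (x + 1) / (Nat.factorial (n + (x + 1)) : ℝ)
    with hf
  set g : ℕ → ℝ := fun x => (n : ℝ) ^ (x + 1) / (Nat.factorial (n + x) : ℝ) with hg
  have hfacne : ∀ k : ℕ, (Nat.factorial k : ℝ) ≠ 0 := fun k => by
    exact_mod_cast (Nat.factorial_ne_zero k)
  have key : ∀ x, f x = g x - g (x + 1) := by
    intro x
    have hfac : (Nat.factorial (n + (x + 1)) : ℝ)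
        = (Nat.factorial (n + x) : ℝ) * ((n : ℝ) + x + 1) := by
      have : n + (x + 1) = (n + x) + 1 := by ring
      rw [this, Nat.factorial_succ]
      push_cast
      ring
    simp only [hf, hg]
    rw [hfac]
    field_simp
    ring
  have hg0 : g 0 = 1 / (Nat.factorial (n - 1) : ℝ) := by
    have hfacn : (Nat.factorial n : ℝ) = (n : ℝ) * (Nat.factorial (n - 1) : ℝ) := by
      rw [← Nat.mul_factorial_pred (by omega : n ≠ 0)]
      push_cast
      ring
    have hnne : (n : ℝ) ≠ 0 := by positivity
    simp only [hg, zero_add, pow_one, add_zero, hfacn]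
    field_simp
  have hfnonneg : ∀ x, 0 ≤ f x := by
    intro x
    apply div_nonneg
    · positivity
    · positivity
  -- g tends to 0
  have htend : Tendsto g atTop (𝓝 0) := by
    have h0 : Tendsto (fun k : ℕ => (n : ℝ) ^ k / (Nat.factorial k : ℝ)) atTop (𝓝 0) :=
      FloorSemiring.tendsto_pow_div_factorial_atTop (n : ℝ)
    have h1 : Tendsto (fun x : ℕ => (n : ℝ) ^ (x + 1) / (Nat.factorial (x + 1) : ℝ))
        atTop (𝓝 0) := h0.comp (tendsto_add_atTop_nat 1)
    apply squeeze_zero (fun x => by positivity) _ h1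
    intro x
    apply div_le_div_of_nonneg_left (by positivity) (by positivity)
    exact_mod_cast Nat.factorial_le (by omega)
  have hhs : HasSum f (1 / (Nat.factorial (n - 1) : ℝ)) := by
    rw [hasSum_iff_tendsto_nat_of_nonneg hfnonneg]
    have hsum : ∀ N : ℕ, ∑ i ∈ Finset.range N, f i = g 0 - g N := by
      intro N
      calc ∑ i ∈ Finset.range N, f i = ∑ i ∈ Finset.range N, (g i - g (i + 1)) := by
            exact Finset.sum_congr rfl fun i _ => key i
        _ = g 0 - g N := Finset.sum_range_sub' g N
    simp only [hsum]
    rw [hg0.symm] at *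
    have := (tendsto_const_nhds (x := g 0) (f := atTop (α := ℕ))).sub htend
    simpa using this
  exact ⟨hhs.summable, hhs.tsum_eq⟩
end
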